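/- arXiv:2408.15622 — 8 statements merged into one kernel-verified Lean document; each statement's English description precedes it below -/
import Mathlib

section
/- Let m be a positive integer and let m_n = gcd{p - 1 : p prime, p divides n}. Then every positive divisor d of n satisfies d ≡ 1 (mod m_n). -/
/-- For `n > 1`, let `m_n = gcd {p - 1 : p prime, p ∣ n}`.
Then every positive divisor `d` of `n` satisfies `d ≡ 1 (mod m_n)`,
i.e. `m_n ∣ d - 1`. -/
theorem stmt_0 (n : ℕ) (hn : 1 < n) (d : ℕ) (hd : d ∣ n) (hd0 : 0 < d) :
    (n.primeFactors.gcd (fun p => p - 1)) ∣ d - 1 := by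
  set m := n.primeFactors.gcd (fun p => p - 1) with hm
  suffices h : d ≡ 1 [MOD m] by
    have := (Nat.modEq_iff_dvd' hd0).mp h.symm
    exact this
  induction d using Nat.strong_induction_on with
  | _ d ih =>
    rcases eq_or_lt_of_le (by omega : 1 ≤ d) with h1 | h1
    · rw [← h1]
    · obtain ⟨p, hp, hpd⟩ := Nat.exists_prime_and_dvd (by omega : d ≠ 1)
      have hpd' := hpd
      obtain ⟨e, he⟩ := hpd
      have hpn : p ∈ n.primeFactors := by
        rw [Nat.mem_primeFactors]
        exact ⟨hp, hpd'.trans hd, by omega⟩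
      have hmp : m ∣ p - 1 := Finset.gcd_dvd hpn
      have hpmod : p ≡ 1 [MOD m] := (Nat.modEq_iff_dvd' hp.one_lt.le).mpr hmp |>.symm
      have he0 : 0 < e := by
        rcases Nat.eq_zero_or_pos e with h | h
        · subst h; simp at he; omega
        · exact h
      have hed : e < d := by
        have : 1 < p := hp.one_lt
        calc e = 1 * e := (one_mul e).symm
          _ < p * e := (Nat.mul_lt_mul_right he0).mpr this
          _ = d := he.symm
      have hen : e ∣ n := (Dvd.intro_left p he.symm : e ∣ d).trans hd
      have hemod := ih e hed hen he0
      calc d = p * e := he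
        _ ≡ 1 * 1 [MOD m] := hpmod.mul hemod
        _ = 1 := one_mul 1
end

section
/- Let G be a finite group, N a normal subgroup of G, and C a subgroup of G such that G is the internal semidirect product N ⋊ C (i.e. G = NC and N ∩ C = 1). Let X ≤ C. Then the number of G-conjugates of C that contain X equals the index (C_N(X) : C_N(C)). -/
/-!
Since `G = NC`, every conjugate of `C` is `C^n` for some `n ∈ N`. For `n ∈ N` and `x ∈ C`,
`x ∈ C^n` forces `[n, x] ∈ N ∩ C = 1`, so `X ≤ C^n` exactly when `n ∈ C_N(X)`, and the
normalizer of `C` in `N` is `C_N(C)`. Hence the conjugates of `C` containing `X` form the orbit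
of `C` under conjugation by `C_N(X)`, with stabilizer `C_N(C)`.
-/

open Pointwise MulAction

namespace Subgroup

variable {G : Type*} [Group G]

theorem conjAct_smul_eq_map_conj (g : G) (H : Subgroup G) :
    ConjAct.toConjAct g • H = H.map (MulAut.conj g).toMonoidHom := by
  ext x
  rw [mem_pointwise_smul_iff_inv_smul_mem, mem_map_equiv, ← ConjAct.toConjAct_inv,
    ConjAct.toConjAct_smul, inv_inv]
  rfl

/-- Orbit–stabilizer for `K` acting on the subgroups of `G` by conjugation. -/
theorem card_conjugates_eq_relIndex (H K : Subgroup G) :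
    Nat.card {D : Subgroup G // ∃ k ∈ K, D = H.map (MulAut.conj k).toMonoidHom} =
      (normalizer (H : Set G)).relIndex K := by
  let _ : MulAction K (Subgroup G) :=
    compHom _ ((ConjAct.toConjAct : G ≃* ConjAct G).toMonoidHom.comp K.subtype)
  have hstab : stabilizer K H = (normalizer (H : Set G)).subgroupOf K := by
    ext k
    exact conjAct_pointwise_smul_iff
  have horbit : orbit K H = {D | ∃ k ∈ K, D = H.map (MulAut.conj k).toMonoidHom} := by
    ext D
    change (∃ k : K, ConjAct.toConjAct (k : G) • H = D) ↔ _
    simp only [conjAct_smul_eq_map_conj, Subtype.exists, exists_prop, eq_comm,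
      Set.mem_ofPred_eq]
  rw [relIndex, ← hstab, index_stabilizer, horbit]
  exact Nat.card_coe_set_eq _

section Complement

variable {N C : Subgroup G} [N.Normal]

theorem conj_eq_self_of_conj_mem (hNC : N ⊓ C = ⊥) {n c : G} (hn : n ∈ N) (hc : c ∈ C)
    (h : n * c * n⁻¹ ∈ C) : n * c * n⁻¹ = c := by
  have hcomm : n * c * n⁻¹ * c⁻¹ ∈ N ⊓ C := by
    refine ⟨?_, C.mul_mem h (C.inv_mem hc)⟩
    rw [mul_assoc, mul_assoc, ← mul_assoc c]
    exact N.mul_mem hn (‹N.Normal›.conj_mem _ (N.inv_mem hn) c)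
  rwa [hNC, mem_bot, mul_inv_eq_one] at hcomm

theorem le_map_conj_iff_mem_centralizer (hNC : N ⊓ C = ⊥) {X : Subgroup G} (hX : X ≤ C)
    {n : G} (hn : n ∈ N) :
    X ≤ C.map (MulAut.conj n).toMonoidHom ↔ n ∈ centralizer (X : Set G) := by
  simp only [SetLike.le_def, mem_map_equiv, MulAut.conj_symm_apply, mem_centralizer_iff]
  refine forall₂_congr fun x hx => ⟨fun h => ?_, fun h => ?_⟩
  · have hfix := conj_eq_self_of_conj_mem hNC (N.inv_mem hn) (hX hx) (by rwa [inv_inv])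
    rw [inv_inv, mul_assoc, inv_mul_eq_iff_eq_mul] at hfix
    exact hfix
  · rw [mul_assoc, h, inv_mul_cancel_left]
    exact hX hx

theorem mem_normalizer_iff_mem_centralizer (hNC : N ⊓ C = ⊥) {n : G} (hn : n ∈ N) :
    n ∈ normalizer (C : Set G) ↔ n ∈ centralizer (C : Set G) := by
  refine ⟨fun h => ?_, fun h => centralizer_le_normalizer _ h⟩
  rw [← le_map_conj_iff_mem_centralizer hNC le_rfl hn]
  exact (mem_normalizer_iff_map_conj_eq.mp h).ge

theorem exists_map_conj_eq_of_sup_eq_top (hNC : N ⊔ C = ⊤) (g : G) :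
    ∃ n ∈ N, C.map (MulAut.conj g).toMonoidHom = C.map (MulAut.conj n).toMonoidHom := by
  obtain ⟨n, hn, c, hc, rfl⟩ := mem_sup_of_normal_left.mp (hNC ▸ mem_top g)
  refine ⟨n, hn, ?_⟩
  rw [← conjAct_smul_eq_map_conj, ← conjAct_smul_eq_map_conj, map_mul, mul_smul,
    conjAct_pointwise_smul_eq_self (le_normalizer hc)]

end Complement

end Subgroup

open Subgroup

theorem stmt_1_general {G : Type*} [Group G] (N C X : Subgroup G)
    [N.Normal] (hNC : N ⊔ C = ⊤) (hNC' : N ⊓ C = ⊥) (hX : X ≤ C) :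
    Nat.card {D : Subgroup G //
        (∃ g : G, D = C.map (MulAut.conj g).toMonoidHom) ∧ X ≤ D} =
      (Subgroup.centralizer (C : Set G) ⊓ N).relIndex
        (Subgroup.centralizer (X : Set G) ⊓ N) := by
  have hconj : ∀ D : Subgroup G, ((∃ g : G, D = C.map (MulAut.conj g).toMonoidHom) ∧ X ≤ D) ↔
      ∃ n ∈ centralizer (X : Set G) ⊓ N, D = C.map (MulAut.conj n).toMonoidHom := by
    intro D
    constructor
    · rintro ⟨⟨g, rfl⟩, hXD⟩
      obtain ⟨n, hn, hgn⟩ := exists_map_conj_eq_of_sup_eq_top hNC g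
      rw [hgn] at hXD ⊢
      exact ⟨n, ⟨(le_map_conj_iff_mem_centralizer hNC' hX hn).mp hXD, hn⟩, rfl⟩
    · rintro ⟨n, ⟨hnX, hn⟩, rfl⟩
      exact ⟨⟨n, rfl⟩, (le_map_conj_iff_mem_centralizer hNC' hX hn).mpr hnX⟩
  have hstab : normalizer (C : Set G) ⊓ (centralizer (X : Set G) ⊓ N) =
      (centralizer (C : Set G) ⊓ N) ⊓ (centralizer (X : Set G) ⊓ N) := by
    ext n
    simp only [mem_inf]
    constructor
    · rintro ⟨hC, hXn, hn⟩
      exact ⟨⟨(mem_normalizer_iff_mem_centralizer hNC' hn).mp hC, hn⟩, hXn, hn⟩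
    · rintro ⟨⟨hC, -⟩, hXn, hn⟩
      exact ⟨(mem_normalizer_iff_mem_centralizer hNC' hn).mpr hC, hXn, hn⟩
  rw [Nat.card_congr (Equiv.subtypeEquivRight hconj), card_conjugates_eq_relIndex,
    ← inf_relIndex_right, hstab, inf_relIndex_right]

/-- If `G = N ⋊ C` (internally: `N ⊴ G`, `N ⊔ C = ⊤`, `N ⊓ C = ⊥`)
and `X ≤ C`, then the number of `G`-conjugates of `C` containing `X` equals the
index `(C_N(X) : C_N(C))`. -/
theorem stmt_1 {G : Type*} [Group G] [Finite G] (N C X : Subgroup G)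
    [N.Normal] (hNC : N ⊔ C = ⊤) (hNC' : N ⊓ C = ⊥) (hX : X ≤ C) :
    Nat.card {D : Subgroup G //
        (∃ g : G, D = C.map (MulAut.conj g).toMonoidHom) ∧ X ≤ D} =
      (Subgroup.centralizer (C : Set G) ⊓ N).relIndex
        (Subgroup.centralizer (X : Set G) ⊓ N) :=
  stmt_1_general N C X hNC hNC' hX
end

section
/- Let P be a finite poset, m a positive integer, and x ∈ P an element that is not maximal. Suppose that for every y ∈ P, the number ν(y) of maximal elements of P lying above y satisfies ν(y) ≡ 1 (mod m). Then the sum over all y ≥ x of the Möbius function μ_P(x, y) is congruent to 0 modulo m. -/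
/-- The Möbius function of a finite partial order. -/
noncomputable def pmu {α : Type*} [PartialOrder α] [Finite α] (a b : α) : ℤ :=
  letI := Fintype.ofFinite α
  letI := Classical.decEq α
  letI : DecidableRel ((· < ·) : α → α → Prop) := Classical.decRel _
  letI : DecidableRel ((· ≤ ·) : α → α → Prop) := Classical.decRel _
  letI : LocallyFiniteOrder α := Fintype.toLocallyFiniteOrder
  IncidenceAlgebra.mu ℤ a b

open scoped Classical in
/-- Let `P` be a finite poset, `m > 0`, and `x ∈ P` not maximal.
If for every `y ∈ P` the number `ν(y)` of maximal elements above `y` satisfies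
`ν(y) ≡ 1 (mod m)`, then `∑_{y ≥ x} μ_P(x, y) ≡ 0 (mod m)`. -/
theorem stmt_3 {P : Type*} [PartialOrder P] [Finite P] (m : ℕ) (hm : 0 < m)
    (x : P) (hx : ¬ IsMax x)
    (hν : ∀ y : P, (m : ℤ) ∣ (Nat.card {z : P // IsMax z ∧ y ≤ z} : ℤ) - 1) :
    (m : ℤ) ∣ ∑ᶠ y ∈ {y : P | x ≤ y}, pmu x y := by
  letI := Fintype.ofFinite P
  letI := Classical.decEq P
  letI : DecidableRel ((· < ·) : P → P → Prop) := Classical.decRel _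
  letI : DecidableRel ((· ≤ ·) : P → P → Prop) := Classical.decRel _
  letI : LocallyFiniteOrder P := Fintype.toLocallyFiniteOrder
  have hpmu : ∀ y : P, pmu x y = IncidenceAlgebra.mu ℤ x y := fun y => rfl
  set μ : P → ℤ := fun y => IncidenceAlgebra.mu ℤ x y with hμ
  set S : Finset P := Finset.univ.filter (fun y => x ≤ y) with hS
  have h1 : ∑ᶠ y ∈ {y : P | x ≤ y}, pmu x y = ∑ y ∈ S, μ y := by
    rw [← finsum_mem_coe_finset]
    apply finsum_congr
    intro y
    apply finsum_congr_Prop <;> simp [hS, hpmu, hμ]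
  rw [h1]
  have hνcard : ∀ y : P, (Nat.card {z : P // IsMax z ∧ y ≤ z} : ℤ)
      = ((Finset.univ.filter (fun z : P => IsMax z ∧ y ≤ z)).card : ℤ) := by
    intro y
    rw [Nat.card_eq_fintype_card, Fintype.card_subtype]
  set ν : P → ℤ := fun y => ((Finset.univ.filter (fun z : P => IsMax z ∧ y ≤ z)).card : ℤ) with hνdef
  have key : ∑ y ∈ S, μ y * ν y = 0 := by
    have step1 : ∀ y : P, μ y * ν y
        = ∑ z : P, if IsMax z ∧ y ≤ z then μ y else 0 := by
      intro y
      rw [← Finset.sum_filter, Finset.sum_const, nsmul_eq_mul, mul_comm]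
    calc ∑ y ∈ S, μ y * ν y
        = ∑ y : P, μ y * ν y := by
          rw [hS]; apply Finset.sum_filter_of_ne
          intro y _ h
          by_contra hxy
          have h0 : μ y = 0 := IncidenceAlgebra.apply_eq_zero_of_not_le hxy _
          exact h (by rw [h0, zero_mul])
      _ = ∑ y : P, ∑ z : P, if IsMax z ∧ y ≤ z then μ y else 0 :=
          Finset.sum_congr rfl fun y _ => step1 y
      _ = ∑ z : P, ∑ y : P, if IsMax z ∧ y ≤ z then μ y else 0 := Finset.sum_comm
      _ = 0 := by
          apply Finset.sum_eq_zero
          intro z _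
          by_cases hz : IsMax z
          · have h2 : ∑ y : P, (if IsMax z ∧ y ≤ z then μ y else 0)
                = ∑ y ∈ Finset.Icc x z, IncidenceAlgebra.mu ℤ x y := by
              rw [← Finset.sum_filter]
              symm
              apply Finset.sum_subset
              · intro y hy
                simp only [Finset.mem_Icc] at hy
                simp [hz, hy.2]
              · intro y hy hny
                simp only [Finset.mem_filter, Finset.mem_univ, true_and, hz] at hy
                simp only [Finset.mem_Icc] at hny
                exact IncidenceAlgebra.apply_eq_zero_of_not_le
                  (fun hxy => hny ⟨hxy, hy⟩) _
            rw [h2, IncidenceAlgebra.sum_Icc_mu_right]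
            have : x ≠ z := fun h => hx (h ▸ hz)
            simp [this]
          · apply Finset.sum_eq_zero
            intro y _
            simp [hz]
  have div : ∀ y ∈ S, (m : ℤ) ∣ μ y * ν y - μ y := by
    intro y _
    have h3 := hν y
    rw [hνcard] at h3
    have h4 : (m : ℤ) ∣ μ y * (ν y - 1) := Dvd.dvd.mul_left h3 _
    simpa [mul_sub] using h4
  have h5 : (m : ℤ) ∣ ∑ y ∈ S, (μ y * ν y - μ y) := Finset.dvd_sum div
  rwa [Finset.sum_sub_distrib, key, zero_sub, dvd_neg] at h5
end

section
/- Let G be a finite group, H ≤ G, and s ∈ G. Let cl_G(s) denote the conjugacy class of s in G. Then the number of G-conjugates of H containing s equals |C_G(s)| · |cl_G(s) ∩ H| / |H| multiplied by |H| / |N_G(H)|; equivalently, |{H^g : g ∈ G, s ∈ H^g}| · |N_G(H)| = |C_G(s)| · |cl_G(s) ∩ H|. -/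
open Subgroup

lemma card_fiber {S T N : Type*} [Finite S] [Finite T] (π : S → T)
    (e : ∀ D : T, {x : S // π x = D} ≃ N) :
    Nat.card S = Nat.card T * Nat.card N := by
  classical
  rcases isEmpty_or_nonempty T with hT | hT
  · have : IsEmpty S := ⟨fun x => IsEmpty.false (π x)⟩
    simp [Nat.card_of_isEmpty]
  · obtain ⟨D₀⟩ := hT
    haveI : Finite N := Finite.of_equiv _ (e D₀)
    haveI : Fintype T := Fintype.ofFinite T
    haveI : Fintype N := Fintype.ofFinite N
    haveI : ∀ D : T, Fintype {x : S // π x = D} := fun D => Fintype.ofFinite _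
    haveI : Fintype S := Fintype.ofFinite S
    rw [Nat.card_congr (Equiv.sigmaFiberEquiv π).symm, Nat.card_eq_fintype_card,
      Fintype.card_sigma, Nat.card_eq_fintype_card, Nat.card_eq_fintype_card]
    rw [Finset.sum_congr rfl fun D _ => Fintype.card_congr (e D)]
    simp [Finset.sum_const, mul_comm]

lemma mem_conj_iff {G : Type*} [Group G] (H : Subgroup G) (g x : G) :
    x ∈ H.map (MulAut.conj g).toMonoidHom ↔ g⁻¹ * x * g ∈ H := by
  simp only [Subgroup.mem_map, MulEquiv.coe_toMonoidHom, MulAut.conj_apply]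
  constructor
  · rintro ⟨h, hh, rfl⟩
    simpa [mul_assoc] using hh
  · intro hx
    exact ⟨g⁻¹ * x * g, hx, by group⟩

lemma conj_eq_conj_iff {G : Type*} [Group G] (H : Subgroup G) (a b : G) :
    H.map (MulAut.conj a).toMonoidHom = H.map (MulAut.conj b).toMonoidHom ↔
      b⁻¹ * a ∈ Subgroup.normalizer (H : Set G) := by
  constructor
  · intro h
    rw [Subgroup.mem_normalizer_iff]
    intro x
    constructor
    · intro hx
      have : a * x * a⁻¹ ∈ H.map (MulAut.conj b).toMonoidHom := by
        rw [← h]; exact ⟨x, hx, rfl⟩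
      rw [mem_conj_iff] at this
      convert this using 1; group
    · intro hx
      have : b * ((b⁻¹ * a) * x * (b⁻¹ * a)⁻¹) * b⁻¹ ∈ H.map (MulAut.conj a).toMonoidHom := by
        rw [h, mem_conj_iff]
        convert hx using 1; group
      rw [mem_conj_iff] at this
      convert this using 1; group
  · intro h
    ext x
    rw [mem_conj_iff, mem_conj_iff]
    rw [Subgroup.mem_normalizer_iff] at h
    rw [h (a⁻¹ * x * a)]
    constructor <;> intro hx <;> [skip; skip] <;> (convert hx using 1; group)

/-- For a finite group `G`, `H ≤ G` and `s ∈ G`, counting pairs in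
two ways gives
`|{H^g : s ∈ H^g}| ⬝ |N_G(H)| = |C_G(s)| ⬝ |cl_G(s) ∩ H|`. -/
theorem stmt_4 {G : Type*} [Group G] [Finite G] (H : Subgroup G) (s : G) :
    Nat.card {D : Subgroup G //
        (∃ g : G, D = H.map (MulAut.conj g).toMonoidHom) ∧ s ∈ D} *
      Nat.card (Subgroup.normalizer (H : Set G)) =
    Nat.card (Subgroup.centralizer {s}) *
      Nat.card {t : G // IsConj s t ∧ t ∈ H} := by
  classical
  set S := {g : G // g⁻¹ * s * g ∈ H} with hS
  -- first count
  have h1 : Nat.card S =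
      Nat.card {D : Subgroup G //
        (∃ g : G, D = H.map (MulAut.conj g).toMonoidHom) ∧ s ∈ D} *
      Nat.card (Subgroup.normalizer (H : Set G)) := by
    apply card_fiber (fun g : S =>
      (⟨H.map (MulAut.conj g.1).toMonoidHom, ⟨g.1, rfl⟩,
        (mem_conj_iff H g.1 s).2 g.2⟩ : {D : Subgroup G //
        (∃ g : G, D = H.map (MulAut.conj g).toMonoidHom) ∧ s ∈ D}))
    intro D
    refine (fun (g₀ : G) (hg₀ : D.1 = H.map (MulAut.conj g₀).toMonoidHom) => ?_)
      D.2.1.choose D.2.1.choose_spec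
    have hg₀S : g₀⁻¹ * s * g₀ ∈ H := (mem_conj_iff H g₀ s).1 (hg₀ ▸ D.2.2)
    refine ⟨fun x => ⟨g₀⁻¹ * x.1.1, ?_⟩, fun n => ⟨⟨g₀ * n.1, ?_⟩, ?_⟩, ?_, ?_⟩
    · have := congrArg Subtype.val x.2
      simp only at this
      rw [hg₀] at this
      exact (conj_eq_conj_iff H _ _).1 this
    · have : s ∈ H.map (MulAut.conj (g₀ * n.1)).toMonoidHom := by
        rw [(conj_eq_conj_iff H (g₀ * n.1) g₀).2 (by simpa using n.2), ← hg₀]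
        exact D.2.2
      exact (mem_conj_iff H _ s).1 this
    · apply Subtype.ext
      simp only
      rw [hg₀]
      exact (conj_eq_conj_iff H _ _).2 (by simpa using n.2)
    · intro x
      apply Subtype.ext; apply Subtype.ext
      simp [mul_assoc]
    · intro n
      apply Subtype.ext
      simp
  -- second count
  have h2 : Nat.card S =
      Nat.card {t : G // IsConj s t ∧ t ∈ H} * Nat.card (Subgroup.centralizer {s}) := by
    apply card_fiber (fun g : S =>
      (⟨g.1⁻¹ * s * g.1, isConj_iff.2 ⟨g.1⁻¹, by group⟩, g.2⟩ :
        {t : G // IsConj s t ∧ t ∈ H}))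
    intro t
    have hg₀ex : ∃ g₀ : G, g₀⁻¹ * s * g₀ = t.1 := by
      obtain ⟨c, hc⟩ := isConj_iff.1 t.2.1
      exact ⟨c⁻¹, by rw [← hc]; group⟩
    refine (fun (g₀ : G) (hg₀ : g₀⁻¹ * s * g₀ = t.1) => ?_) hg₀ex.choose hg₀ex.choose_spec
    have hg₀S : g₀⁻¹ * s * g₀ ∈ H := hg₀ ▸ t.2.2
    refine ⟨fun x => ⟨x.1.1 * g₀⁻¹, ?_⟩, fun n => ⟨⟨n.1 * g₀, ?_⟩, ?_⟩, ?_, ?_⟩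
    · have hx : x.1.1⁻¹ * s * x.1.1 = t.1 := congrArg Subtype.val x.2
      rw [Subgroup.mem_centralizer_singleton_iff]
      have key : x.1.1⁻¹ * s * x.1.1 = g₀⁻¹ * s * g₀ := by rw [hx, hg₀]
      calc x.1.1 * g₀⁻¹ * s = x.1.1 * (g₀⁻¹ * s * g₀) * g₀⁻¹ := by group
        _ = x.1.1 * (x.1.1⁻¹ * s * x.1.1) * g₀⁻¹ := by rw [key]
        _ = s * (x.1.1 * g₀⁻¹) := by group
    · have hn := Subgroup.mem_centralizer_singleton_iff.1 n.2
      show (n.1 * g₀)⁻¹ * s * (n.1 * g₀) ∈ H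
      rw [show (n.1 * g₀)⁻¹ * s * (n.1 * g₀) = g₀⁻¹ * (n.1⁻¹ * (s * n.1)) * g₀ by group,
        ← hn, show g₀⁻¹ * (n.1⁻¹ * (n.1 * s)) * g₀ = g₀⁻¹ * s * g₀ by group]
      exact hg₀S
    · apply Subtype.ext
      have hn := Subgroup.mem_centralizer_singleton_iff.1 n.2
      show (n.1 * g₀)⁻¹ * s * (n.1 * g₀) = t.1
      rw [show (n.1 * g₀)⁻¹ * s * (n.1 * g₀) = g₀⁻¹ * (n.1⁻¹ * (s * n.1)) * g₀ by group,
        ← hn, show g₀⁻¹ * (n.1⁻¹ * (n.1 * s)) * g₀ = g₀⁻¹ * s * g₀ by group, hg₀]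
    · intro x
      apply Subtype.ext; apply Subtype.ext
      simp [mul_assoc]
    · intro n
      apply Subtype.ext
      simp
  rw [← h1, h2, mul_comm]
end

section
/- Let p be a prime and let V be the additive group of the field F_{2^p}, regarded as an elementary abelian 2-group. If β ∈ F_{2^p}^* satisfies βK = K for some subgroup K of V of index 2, then β = 1. Consequently the multiplicative group F_{2^p}^* acts regularly (simply transitively) on the set of index-2 subgroups of V. -/
private lemma zmod2_cases : ∀ c : ZMod 2, c = 0 ∨ c = 1 := by decide

open scoped Classical in
/-- The indicator functional of an index-2 subgroup. -/
noncomputable def idxPhi {p : ℕ} (K : AddSubgroup (GaloisField 2 p)) (hK : K.index = 2) :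
    GaloisField 2 p →ₗ[ZMod 2] ZMod 2 where
  toFun x := if x ∈ K then 0 else 1
  map_add' x y := by
    have key : x + y ∈ K ↔ (x ∈ K ↔ y ∈ K) := AddSubgroup.add_mem_iff_of_index_two hK
    by_cases hx : x ∈ K <;> by_cases hy : y ∈ K <;>
      simp [hx, hy, key] <;> decide
  map_smul' c x := by
    rcases zmod2_cases c with rfl | rfl
    · simp [AddSubgroup.zero_mem]
    · simp

open scoped Classical in
lemma idxPhi_apply {p : ℕ} (K : AddSubgroup (GaloisField 2 p)) (hK : K.index = 2)
    (x : GaloisField 2 p) : idxPhi K hK x = if x ∈ K then 0 else 1 := rfl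

lemma key_repr {p : ℕ} (K : AddSubgroup (GaloisField 2 p)) (hK : K.index = 2) :
    ∃ a : GaloisField 2 p, a ≠ 0 ∧
      ∀ x, (Algebra.trace (ZMod 2) (GaloisField 2 p) (a * x) = 0 ↔ x ∈ K) := by
  classical
  set φ := idxPhi K hK with hφ
  set e := LinearMap.BilinForm.toDual (Algebra.traceForm (ZMod 2) (GaloisField 2 p))
    (traceForm_nondegenerate (ZMod 2) (GaloisField 2 p)) with he
  have happ : ∀ x, Algebra.trace (ZMod 2) (GaloisField 2 p) (e.symm φ * x) = φ x := by
    intro x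
    have h2 := LinearMap.BilinForm.apply_toDual_symm_apply
      (hB := traceForm_nondegenerate (ZMod 2) (GaloisField 2 p)) φ x
    rw [Algebra.traceForm_apply] at h2
    exact h2
  have hKne : ∃ x, x ∉ K := by
    by_contra h
    push_neg at h
    have : K = ⊤ := by ext x; simpa using h x
    rw [this, AddSubgroup.index_top] at hK
    omega
  obtain ⟨x₀, hx₀⟩ := hKne
  refine ⟨e.symm φ, ?_, ?_⟩
  · intro h0
    have h3 := happ x₀
    rw [h0, zero_mul, map_zero, hφ, idxPhi_apply, if_neg hx₀] at h3
    exact absurd h3 (by decide)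
  · intro x
    rw [happ x, hφ, idxPhi_apply]
    by_cases hx : x ∈ K <;> simp [hx]

lemma trace_inj {p : ℕ} {a b : GaloisField 2 p}
    (h : ∀ x, Algebra.trace (ZMod 2) (GaloisField 2 p) (a * x)
            = Algebra.trace (ZMod 2) (GaloisField 2 p) (b * x)) : a = b := by
  have hnd := traceForm_nondegenerate (ZMod 2) (GaloisField 2 p)
  have h0 : a - b = 0 := by
    apply hnd.1
    intro x
    simp only [map_sub, LinearMap.sub_apply, Algebra.traceForm_apply, h x, sub_self]
  exact sub_eq_zero.mp h0

lemma repr_unique {p : ℕ} {K : AddSubgroup (GaloisField 2 p)} {a b : GaloisField 2 p}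
    (ha : ∀ x, (Algebra.trace (ZMod 2) (GaloisField 2 p) (a * x) = 0 ↔ x ∈ K))
    (hb : ∀ x, (Algebra.trace (ZMod 2) (GaloisField 2 p) (b * x) = 0 ↔ x ∈ K)) : a = b := by
  apply trace_inj
  intro x
  rcases zmod2_cases (Algebra.trace (ZMod 2) (GaloisField 2 p) (a * x)) with h | h <;>
    rcases zmod2_cases (Algebra.trace (ZMod 2) (GaloisField 2 p) (b * x)) with h' | h'
  · rw [h, h']
  · exact absurd ((hb x).mpr ((ha x).mp h)) (by rw [h']; decide)
  · exact absurd ((ha x).mpr ((hb x).mp h')) (by rw [h]; decide)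
  · rw [h, h']

lemma map_map_mulLeft {p : ℕ} (K : AddSubgroup (GaloisField 2 p)) (a b : GaloisField 2 p) :
    (K.map (AddMonoidHom.mulLeft b)).map (AddMonoidHom.mulLeft a)
      = K.map (AddMonoidHom.mulLeft (a * b)) := by
  rw [AddSubgroup.map_map]
  congr 1
  ext x
  simp [mul_assoc]

lemma map_mulLeft_one {p : ℕ} (K : AddSubgroup (GaloisField 2 p)) :
    K.map (AddMonoidHom.mulLeft (1 : GaloisField 2 p)) = K := by
  ext x
  simp

lemma map_mulLeft_eq {p : ℕ} (K₁ K₂ : AddSubgroup (GaloisField 2 p))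
    {a₁ a₂ : GaloisField 2 p} (ha₁ : a₁ ≠ 0) (ha₂ : a₂ ≠ 0)
    (haK₁ : ∀ x, (Algebra.trace (ZMod 2) (GaloisField 2 p) (a₁ * x) = 0 ↔ x ∈ K₁))
    (haK₂ : ∀ x, (Algebra.trace (ZMod 2) (GaloisField 2 p) (a₂ * x) = 0 ↔ x ∈ K₂)) :
    K₁.map (AddMonoidHom.mulLeft (a₁ * a₂⁻¹)) = K₂ := by
  ext y
  simp only [AddSubgroup.mem_map, AddMonoidHom.coe_mulLeft]
  constructor
  · rintro ⟨x, hx, rfl⟩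
    rw [← haK₂]
    have h1 : a₂ * (a₁ * a₂⁻¹ * x) = a₁ * x := by field_simp
    rw [h1]
    exact (haK₁ x).mpr hx
  · intro hy
    refine ⟨a₂ * a₁⁻¹ * y, ?_, ?_⟩
    · rw [← haK₁]
      have h1 : a₁ * (a₂ * a₁⁻¹ * y) = a₂ * y := by field_simp
      rw [h1]
      exact (haK₂ y).mpr hy
    · field_simp

/-- Let `F = F_{2^p}` and `V` its additive group. If `β ∈ F*`
fixes setwise some index-2 additive subgroup `K` of `V`, then `β = 1`;
consequently `F*` acts simply transitively on the index-2 subgroups of `V`. -/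
theorem stmt_7 (p : ℕ) (hp : p.Prime) :
    (∀ β : @GaloisField 2 ⟨Nat.prime_two⟩ p, β ≠ 0 →
      ∀ K : AddSubgroup (@GaloisField 2 ⟨Nat.prime_two⟩ p), K.index = 2 →
        K.map (AddMonoidHom.mulLeft β) = K → β = 1) ∧
    (∀ K₁ K₂ : AddSubgroup (@GaloisField 2 ⟨Nat.prime_two⟩ p),
      K₁.index = 2 → K₂.index = 2 →
        ∃! β : @GaloisField 2 ⟨Nat.prime_two⟩ p,
          β ≠ 0 ∧ K₁.map (AddMonoidHom.mulLeft β) = K₂) := by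
  have part1 : ∀ β : GaloisField 2 p, β ≠ 0 →
      ∀ K : AddSubgroup (GaloisField 2 p), K.index = 2 →
        K.map (AddMonoidHom.mulLeft β) = K → β = 1 := by
    intro β hβ K hK hmap
    obtain ⟨a, ha0, haK⟩ := key_repr K hK
    have hmem : ∀ x : GaloisField 2 p, x ∈ K ↔ β * x ∈ K := by
      intro x
      constructor
      · intro hx
        rw [← hmap]
        exact ⟨x, hx, rfl⟩
      · intro hx
        rw [← hmap] at hx
        obtain ⟨k, hk, hke⟩ := hx
        have : β * k = β * x := hke
        rwa [mul_left_cancel₀ hβ this] at hk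
    have hab : a * β = a := by
      apply repr_unique (K := K) _ haK
      intro x
      rw [mul_assoc]
      rw [haK (β * x)]
      exact (hmem x).symm
    have := mul_left_cancel₀ ha0 (by rw [hab, mul_one] : a * β = a * 1)
    exact this
  refine ⟨part1, ?_⟩
  intro K₁ K₂ hK₁ hK₂
  obtain ⟨a₁, ha₁, haK₁⟩ := key_repr K₁ hK₁
  obtain ⟨a₂, ha₂, haK₂⟩ := key_repr K₂ hK₂
  have hβ0 : a₁ * a₂⁻¹ ≠ 0 := mul_ne_zero ha₁ (inv_ne_zero ha₂)
  have hmapβ := map_mulLeft_eq K₁ K₂ ha₁ ha₂ haK₁ haK₂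
  refine ⟨a₁ * a₂⁻¹, ⟨hβ0, hmapβ⟩, ?_⟩
  rintro β' ⟨hβ'0, hmap'⟩
  have key : K₁.map (AddMonoidHom.mulLeft ((a₁ * a₂⁻¹)⁻¹ * β')) = K₁ := by
    rw [← map_map_mulLeft, hmap', ← hmapβ, map_map_mulLeft, inv_mul_cancel₀ hβ0,
      map_mulLeft_one]
  have h1 := part1 ((a₁ * a₂⁻¹)⁻¹ * β') (mul_ne_zero (inv_ne_zero hβ0) hβ'0) K₁ hK₁ key
  exact ((inv_mul_eq_one₀ hβ0).mp h1).symm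
end

section
/- Let G be a finite group with a normal Hall q'-subgroup N, let Q be a Sylow q-subgroup of G, and let U be a nilpotent self-normalizing subgroup of C_N(Q) (the centralizer of Q in N). Then QU is a nilpotent self-normalizing subgroup of G. -/
/-!
Since `U` centralizes `Q`, the group `QU` is a central product of two nilpotent groups, hence
nilpotent, and `Q` is a normal Sylow subgroup of `QU`. An element `g` normalizing `QU` therefore
normalizes `Q`, and, as it also normalizes `N`, it normalizes `QU ∩ N = U`. Writing `g = n x`
with `n ∈ N`, `x ∈ Q`, the factor `n` normalizes `Q` and `U`; since `[n, Q] ≤ Q ∩ N = 1`, it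
centralizes `Q`, so `n ∈ N_{C_N(Q)}(U) = U` and `g ∈ QU`.
-/

open Subgroup

open scoped Pointwise

namespace Subgroup

variable {G : Type*} [Group G]

theorem isNilpotent_sup_of_le_centralizer {H K : Subgroup G} [Group.IsNilpotent H]
    [Group.IsNilpotent K] (hKH : K ≤ centralizer H) :
    Group.IsNilpotent (H ⊔ K : Subgroup G) := by
  have hcomm : ∀ (h : H) (k : K), Commute (H.subtype h) (K.subtype k) :=
    fun h k ↦ mem_centralizer_iff.mp (hKH k.2) h h.2
  let f := MonoidHom.noncommCoprod H.subtype K.subtype hcomm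
  have hf : f.range = H ⊔ K := by
    rw [MonoidHom.noncommCoprod_range H.subtype K.subtype hcomm, range_subtype, range_subtype]
  exact hf ▸ Group.nilpotent_of_surjective f.rangeRestrict f.rangeRestrict_surjective

theorem sup_inf_eq_of_le_normalizer {H K N : Subgroup G} (hHK : H ≤ normalizer K)
    (hKN : K ≤ N) (hNH : N ⊓ H = ⊥) : (H ⊔ K) ⊓ N = K := by
  apply SetLike.coe_injective
  rw [coe_inf, coe_mul_of_left_le_normalizer_right H K hHK, Set.inter_comm,
    ← inf_mul_assoc N H K hKN, hNH, coe_bot, Set.singleton_one, one_mul]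

theorem normalizer_inf_le_centralizer {H N : Subgroup G} [N.Normal] (hNH : N ⊓ H = ⊥) :
    normalizer H ⊓ N ≤ centralizer H := by
  rintro n ⟨hnH, hnN⟩
  rw [mem_centralizer_iff]
  intro y hy
  have hcomm : n * y * n⁻¹ * y⁻¹ ∈ N ⊓ H := by
    refine ⟨?_, mul_mem ((mem_normalizer_iff.mp hnH y).mp hy) (H.inv_mem hy)⟩
    rw [mul_assoc, mul_assoc]
    exact mul_mem hnN (by simpa [mul_assoc] using ‹N.Normal›.conj_mem _ (N.inv_mem hnN) y)
  rw [hNH, mem_bot, mul_inv_eq_one, mul_inv_eq_iff_eq_mul] at hcomm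
  exact hcomm.symm

end Subgroup

theorem IsPGroup.inf_eq_bot_of_not_dvd {G : Type*} [Group G] {p : ℕ} [Fact p.Prime]
    {H K : Subgroup G} [Finite H] (hH : IsPGroup p H) (hK : ¬ p ∣ Nat.card K) :
    K ⊓ H = ⊥ := by
  obtain ⟨k, hk⟩ := hH.exists_card_eq
  refine disjoint_iff.mp (disjoint_of_coprime_natCard ?_)
  rw [hk]
  exact ((Nat.Prime.coprime_iff_not_dvd Fact.out).mpr hK).symm.pow_right k

namespace Sylow

variable {G : Type*} [Group G] {p : ℕ}

theorem normalizer_le_normalizer_of_le_of_le_normalizer {P : Sylow p G} {H : Subgroup G}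
    (hPH : (P : Subgroup G) ≤ H) (hH : H ≤ normalizer (P : Set G)) :
    normalizer (H : Set G) ≤ normalizer (P : Set G) := by
  intro g hg
  rw [← smul_eq_iff_mem_normalizer]
  have hgP : ((g • P : Sylow p G) : Subgroup G) ≤ H := by
    rw [coe_subgroup_smul, Subgroup.pointwise_smul_def]
    exact (mem_normalizer_iff_map_conj_eq.mp hg).le.trans' (map_mono hPH)
  have hgP' : ((g • P : Sylow p G) : Subgroup G) ≤ P := by
    rw [← inf_eq_left, ← (g • P).isPGroup'.inf_normalizer_sylow, inf_eq_left]
    exact hgP.trans hH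
  exact Sylow.ext ((g • P).3 P.2 hgP').symm

theorem sup_eq_top_of_isPGroup_quotient [Fact p.Prime] [Finite G] (P : Sylow p G)
    {N : Subgroup G} [N.Normal] (hN : IsPGroup p (G ⧸ N)) : N ⊔ P = ⊤ := by
  obtain ⟨n, hn⟩ := hN.exists_card_eq
  rw [← index_eq_one]
  have hdvd : (N ⊔ P).index ∣ p ^ n := hn ▸ N.index_eq_card ▸ index_dvd_of_le le_sup_left
  have hcop : (N ⊔ P).index.Coprime p :=
    ((Nat.Prime.coprime_iff_not_dvd Fact.out).mpr P.not_dvd_index).symm.coprime_dvd_left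
      (index_dvd_of_le le_sup_right)
  exact Nat.Coprime.eq_one_of_dvd (hcop.pow_right n) hdvd

end Sylow

/-- Let `G` be finite with a normal Hall `q'`-subgroup `N`,
`Q` a Sylow `q`-subgroup of `G`, and `U` a nilpotent subgroup of `C_N(Q)` that
is self-normalizing in `C_N(Q)`. Then `QU` is nilpotent and self-normalizing
in `G`. -/
theorem stmt_11 {G : Type*} [Group G] [Finite G]
    (q : ℕ) (hq : q.Prime)
    (N : Subgroup G) [N.Normal] (hN : ¬ q ∣ Nat.card N)
    (hGN : IsPGroup q (G ⧸ N))
    (Q : Sylow q G)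
    (U : Subgroup G)
    (hU : U ≤ Subgroup.centralizer ((Q : Subgroup G) : Set G) ⊓ N)
    (hUnil : Group.IsNilpotent U)
    (hUself : Subgroup.normalizer (U : Set G) ⊓ (Subgroup.centralizer ((Q : Subgroup G) : Set G) ⊓ N) = U) :
    Group.IsNilpotent ((Q : Subgroup G) ⊔ U : Subgroup G) ∧
    Subgroup.normalizer (((Q : Subgroup G) ⊔ U : Subgroup G) : Set G) = (Q : Subgroup G) ⊔ U := by
  have : Fact q.Prime := ⟨hq⟩
  have := Q.isPGroup'.isNilpotent
  have hUQ : U ≤ centralizer Q := hU.trans inf_le_left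
  have hQU : (Q : Subgroup G) ≤ normalizer U :=
    (le_centralizer_iff.mp hUQ).trans (centralizer_le_normalizer _)
  have hNQ : N ⊓ Q = ⊥ := Q.isPGroup'.inf_eq_bot_of_not_dvd hN
  refine ⟨isNilpotent_sup_of_le_centralizer hUQ, le_antisymm ?_ le_normalizer⟩
  intro g hg
  have hgQ : g ∈ normalizer Q := Q.normalizer_le_normalizer_of_le_of_le_normalizer le_sup_left
    (sup_le le_normalizer (hUQ.trans (centralizer_le_normalizer _))) hg
  have hgU : g ∈ normalizer U := sup_inf_eq_of_le_normalizer hQU (hU.trans inf_le_right) hNQ ▸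
    inf_normalizer_le_normalizer_inf ⟨hg, le_normalizer_of_normal (mem_top g)⟩
  obtain ⟨n, hn, x, hx, rfl⟩ : g ∈ (N : Set G) * ((Q : Subgroup G) : Set G) := by
    rw [← normal_mul, Q.sup_eq_top_of_isPGroup_quotient hGN]
    trivial
  have hnQ : n ∈ normalizer Q := by simpa using mul_mem hgQ (inv_mem (le_normalizer hx))
  have hnNU : n ∈ normalizer U := by simpa using mul_mem hgU (inv_mem (hQU hx))
  have hnU : n ∈ U := hUself ▸ ⟨hnNU, normalizer_inf_le_centralizer hNQ ⟨hnQ, hn⟩, hn⟩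
  exact mul_mem (mem_sup_right hnU) (mem_sup_left hx)
end

section
/- Let p be a prime, n = p^a, q = p^n, and r a Zsigmondy prime for (p, n). In the group G = JRV ≤ AΓL_1(q), where V ≅ F_q^+ is the translation subgroup, R ≤ F_q^* is the subgroup of order r acting by multiplication, and J ≅ Aut(F_q) is cyclic of order n, the following hold: C_V(R) = 1, N_G(R) = JR, and C_G(R) = R. -/
/-!
`R` is generated by `x ↦ u x` for an element `u ≠ 1` of order `r`. A permutation normalizing `R`
conjugates `x ↦ u x` to some `x ↦ d x` with `d ≠ 1`, hence fixes `0`; in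
`G = {x ↦ a τ(x) + b}` this forces `b = 0`, which gives `C_V(R) = 1` and `N_G(R) = JR`.
If `x ↦ a τ(x)` also commutes with `x ↦ u x`, then `τ` fixes `u`, so the fixed field of `τ`
contains an element of order `r`. As `r` is a Zsigmondy prime, that field is all of `F_q`:
`τ = 1` and `C_G(R) = R`.
-/

/-- The translation subgroup `V ≅ F_q⁺` of `Sym(F_q)`. -/
def transSubgroup (p n : ℕ) [Fact p.Prime] :
    Subgroup (Equiv.Perm (GaloisField p n)) :=
  Subgroup.closure (Set.range fun b : GaloisField p n => Equiv.addLeft b)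

/-- The subgroup `R` of order `r` of multiplications, i.e. the multiplications
by `r`-th roots of unity in `F_q*`. -/
def mulSubgroup (p n r : ℕ) [Fact p.Prime] :
    Subgroup (Equiv.Perm (GaloisField p n)) :=
  Subgroup.closure
    {σ | ∃ (a : GaloisField p n) (ha : a ≠ 0), a ^ r = 1 ∧ σ = Equiv.mulLeft₀ a ha}

/-- The subgroup `J ≅ Aut(F_q)` of field automorphisms inside `Sym(F_q)`. -/
def galSubgroup (p n : ℕ) [Fact p.Prime] :
    Subgroup (Equiv.Perm (GaloisField p n)) :=
  Subgroup.closure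
    {σ | ∃ τ : GaloisField p n ≃+* GaloisField p n, σ = (τ : GaloisField p n ≃ GaloisField p n)}

open Equiv Subgroup

theorem FiniteField.subfield_eq_top_of_orderOf_not_dvd {K : Type*} [Field K] [Finite K]
    {p n : ℕ} [CharP K p] (hK : Nat.card K = p ^ n) {u : Kˣ}
    (hu : ∀ j, 1 ≤ j → j < n → ¬ orderOf u ∣ p ^ j - 1) {F : Subfield K} (huF : (u : K) ∈ F) :
    F = ⊤ := by
  have := Fintype.ofFinite F
  obtain ⟨j, hp, hF⟩ := FiniteField.card F p
  have hdvd : orderOf u ∣ p ^ (j : ℕ) - 1 := by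
    refine orderOf_dvd_of_pow_eq_one (Units.ext ?_)
    have := FiniteField.pow_card_sub_one_eq_one (⟨u, huF⟩ : F) (by simp [Subtype.ext_iff])
    rw [hF] at this
    simpa using congrArg Subtype.val this
  have hnj : n ≤ j := not_lt.mp fun hjn => hu j j.pos hjn hdvd
  have hcard : Nat.card K ≤ Nat.card F := by
    rw [hK, Nat.card_eq_fintype_card, hF]
    exact Nat.pow_le_pow_right hp.pos hnj
  have htop : F.toAddSubgroup = ⊤ := AddSubgroup.eq_top_of_le_card _ hcard
  exact eq_top_iff.mpr fun x _ => (AddSubgroup.eq_top_iff' _).mp htop x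

theorem FiniteField.ringEquiv_eq_refl_of_apply_eq {K : Type*} [Field K] [Finite K]
    {p n : ℕ} [CharP K p] (hK : Nat.card K = p ^ n) {u : Kˣ}
    (hu : ∀ j, 1 ≤ j → j < n → ¬ orderOf u ∣ p ^ j - 1) {τ : K ≃+* K} (hτ : τ u = u) :
    τ = RingEquiv.refl K := by
  have htop := subfield_eq_top_of_orderOf_not_dvd hK hu
    (F := (τ : K →+* K).eqLocusField (RingHom.id K)) hτ
  ext x
  exact (htop ▸ Subfield.mem_top x : x ∈ (τ : K →+* K).eqLocusField (RingHom.id K))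

section

variable (K : Type*) [Field K] (r : ℕ)

/- For `K = GaloisField p n` the first three are definitionally `transSubgroup p n`,
`mulSubgroup p n r` and `galSubgroup p n`. -/

def translationSubgroup : Subgroup (Perm K) :=
  closure (Set.range fun b : K => Equiv.addLeft b)

def rootMulSubgroup : Subgroup (Perm K) :=
  closure {σ | ∃ (a : K) (ha : a ≠ 0), a ^ r = 1 ∧ σ = Equiv.mulLeft₀ a ha}

def ringAutSubgroup : Subgroup (Perm K) :=
  closure {σ | ∃ τ : K ≃+* K, σ = (τ : K ≃ K)}

def semiaffineSubgroup : Subgroup (Perm K) where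
  carrier := {σ | ∃ (τ : K ≃+* K) (a b : K), a ≠ 0 ∧ a ^ r = 1 ∧ ∀ x, σ x = a * τ x + b}
  one_mem' := ⟨RingEquiv.refl K, 1, 0, one_ne_zero, one_pow r, by simp⟩
  mul_mem' := by
    rintro σ₁ σ₂ ⟨τ₁, a₁, b₁, ha₁, ha₁r, h₁⟩ ⟨τ₂, a₂, b₂, ha₂, ha₂r, h₂⟩
    refine ⟨τ₂.trans τ₁, a₁ * τ₁ a₂, a₁ * τ₁ b₂ + b₁, by simp [ha₁, ha₂], ?_, fun x => ?_⟩
    · rw [mul_pow, ← map_pow, ha₁r, ha₂r, map_one, one_mul]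
    · simp only [Perm.mul_apply, h₁, h₂, RingEquiv.trans_apply, map_add, map_mul]
      ring
  inv_mem' := by
    rintro σ ⟨τ, a, b, ha, har, h⟩
    refine ⟨τ.symm, τ.symm a⁻¹, -τ.symm (a⁻¹ * b), by simp [ha], ?_, fun y => ?_⟩
    · rw [← map_pow, inv_pow, har, inv_one, map_one]
    · rw [Perm.inv_def, symm_apply_eq, h]
      simp only [map_add, map_mul, map_neg, RingEquiv.apply_symm_apply]
      field_simp
      ring

end

section

variable {K : Type*} [Field K] {r : ℕ}

theorem mulLeft₀_mem_rootMulSubgroup {a : K} (ha : a ≠ 0) (har : a ^ r = 1) :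
    Equiv.mulLeft₀ a ha ∈ rootMulSubgroup K r :=
  subset_closure ⟨a, ha, har, rfl⟩

theorem rootMulSubgroup_le_range : rootMulSubgroup K r ≤ (MulAction.toPermHom Kˣ K).range :=
  closure_le _ |>.mpr fun _ ⟨a, ha, _, hσ⟩ => ⟨Units.mk0 a ha, by ext; simp [hσ]⟩

theorem translationSubgroup_le_range :
    translationSubgroup K ≤ (Equiv.constVAddHom K K).range :=
  closure_le _ |>.mpr fun _ ⟨b, hσ⟩ => ⟨.ofAdd b, by ext; simp [← hσ, Equiv.constVAddHom]⟩

theorem rootMulSubgroup_le_centralizer :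
    rootMulSubgroup K r ≤ centralizer (rootMulSubgroup K r : Set (Perm K)) := by
  intro σ hσ
  rw [mem_centralizer_iff]
  intro ρ hρ
  obtain ⟨u, rfl⟩ := rootMulSubgroup_le_range hσ
  obtain ⟨v, rfl⟩ := rootMulSubgroup_le_range hρ
  rw [← map_mul, ← map_mul, mul_comm]

theorem ringEquiv_conj_mulLeft₀ (τ : K ≃+* K) {a : K} (ha : a ≠ 0) :
    (τ : Perm K) * Equiv.mulLeft₀ a ha * (τ : Perm K)⁻¹ =
      Equiv.mulLeft₀ (τ a) (by simpa using ha) := by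
  ext x
  simp [Perm.inv_def]

theorem ringAutSubgroup_le_normalizer :
    ringAutSubgroup K ≤ normalizer (rootMulSubgroup K r : Set (Perm K)) := by
  refine closure_le _ |>.mpr ?_
  rintro _ ⟨τ, rfl⟩
  rw [SetLike.mem_coe, mem_normalizer_iff_map_conj_eq, rootMulSubgroup, MonoidHom.map_closure]
  congr 1
  ext σ
  constructor
  · rintro ⟨_, ⟨a, ha, har, rfl⟩, rfl⟩
    exact ⟨τ a, by simpa using ha, by rw [← map_pow, har, map_one],
      ringEquiv_conj_mulLeft₀ τ ha⟩
  · rintro ⟨a, ha, har, rfl⟩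
    have ha' : τ.symm a ≠ 0 := by simpa using ha
    refine ⟨Equiv.mulLeft₀ (τ.symm a) ha', ⟨_, ha', by rw [← map_pow, har, map_one], rfl⟩, ?_⟩
    simp only [MonoidHom.coe_coe, MulAut.conj_apply, ringEquiv_conj_mulLeft₀]
    ext x
    simp

theorem sup_le_semiaffineSubgroup :
    ringAutSubgroup K ⊔ rootMulSubgroup K r ⊔ translationSubgroup K ≤ semiaffineSubgroup K r := by
  refine sup_le (sup_le ?_ ?_) ?_ <;> refine closure_le _ |>.mpr ?_
  · rintro _ ⟨τ, rfl⟩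
    exact ⟨τ, 1, 0, one_ne_zero, one_pow r, by simp⟩
  · rintro _ ⟨a, ha, har, rfl⟩
    exact ⟨RingEquiv.refl K, a, 0, ha, har, by simp⟩
  · rintro _ ⟨b, rfl⟩
    exact ⟨RingEquiv.refl K, 1, b, one_ne_zero, one_pow r, fun x => by simp [add_comm]⟩

/- `d ≠ 1`, since otherwise `x ↦ c x` would be the identity; so `σ 0`, being fixed by
`x ↦ d x`, is `0`. -/
theorem Equiv.Perm.apply_zero_eq_zero_of_conj_mul {σ : Perm K} {c d : K} (hc : c ≠ 1)
    (h : ∀ x, σ (c * σ⁻¹ x) = d * x) : σ 0 = 0 := by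
  by_contra h0
  have hd : d = 1 := by
    have := h (σ 0)
    rw [Perm.inv_def, symm_apply_apply, mul_zero] at this
    exact (mul_eq_right₀ h0).mp this.symm
  have := h (σ 1)
  rw [Perm.inv_def, symm_apply_apply, mul_one, hd, one_mul] at this
  exact hc (σ.injective this)

variable {u : Kˣ} (hu1 : u ≠ 1) (hur : (u : K) ^ r = 1)
include hu1 hur

theorem apply_zero_eq_zero_of_mem_normalizer {σ : Perm K}
    (hσ : σ ∈ normalizer (rootMulSubgroup K r : Set (Perm K))) : σ 0 = 0 := by
  have hconj := (hσ _).mp (mulLeft₀_mem_rootMulSubgroup u.ne_zero hur)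
  obtain ⟨d, hd⟩ := rootMulSubgroup_le_range hconj
  refine Perm.apply_zero_eq_zero_of_conj_mul (c := (u : K)) (d := d) (by simpa using hu1) ?_
  intro x
  simpa [Units.smul_def] using (Perm.ext_iff.mp hd x).symm

theorem centralizer_rootMulSubgroup_inf_translationSubgroup :
    centralizer (rootMulSubgroup K r : Set (Perm K)) ⊓ translationSubgroup K = ⊥ := by
  refine eq_bot_iff.mpr fun σ ⟨hC, hV⟩ => ?_
  have h0 := apply_zero_eq_zero_of_mem_normalizer hu1 hur <| centralizer_le_normalizer _ hC
  obtain ⟨b, rfl⟩ := translationSubgroup_le_range hV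
  have hb : b = 1 := by simpa [Equiv.constVAddHom] using h0
  rw [hb, map_one]
  exact one_mem _

theorem normalizer_rootMulSubgroup_inf_eq :
    normalizer (rootMulSubgroup K r : Set (Perm K)) ⊓
        (ringAutSubgroup K ⊔ rootMulSubgroup K r ⊔ translationSubgroup K) =
      ringAutSubgroup K ⊔ rootMulSubgroup K r := by
  refine le_antisymm (fun σ ⟨hN, hG⟩ => ?_)
    (le_inf (sup_le ringAutSubgroup_le_normalizer le_normalizer) le_sup_left)
  obtain ⟨τ, a, b, ha, har, hσ⟩ := sup_le_semiaffineSubgroup hG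
  have hb : b = 0 := by
    simpa [hσ] using apply_zero_eq_zero_of_mem_normalizer hu1 hur hN
  have : σ = Equiv.mulLeft₀ a ha * (τ : Perm K) := by ext x; simp [hσ, hb]
  rw [this]
  exact mul_mem (mem_sup_right (mulLeft₀_mem_rootMulSubgroup ha har))
    (mem_sup_left (subset_closure ⟨τ, rfl⟩))

theorem centralizer_rootMulSubgroup_inf_eq (hfix : ∀ τ : K ≃+* K, τ u = u → τ = RingEquiv.refl K) :
    centralizer (rootMulSubgroup K r : Set (Perm K)) ⊓
        (ringAutSubgroup K ⊔ rootMulSubgroup K r ⊔ translationSubgroup K) =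
      rootMulSubgroup K r := by
  refine le_antisymm (fun σ ⟨hC, hG⟩ => ?_)
    (le_inf rootMulSubgroup_le_centralizer (le_sup_right.trans le_sup_left))
  obtain ⟨τ, a, b, ha, har, hσ⟩ := sup_le_semiaffineSubgroup hG
  have hb : b = 0 := by
    simpa [hσ] using apply_zero_eq_zero_of_mem_normalizer hu1 hur <| centralizer_le_normalizer _ hC
  have hτu : τ u = u := by
    have hcomm := mem_centralizer_iff.mp hC _ (mulLeft₀_mem_rootMulSubgroup u.ne_zero hur)
    have h1 : a * τ u = u * a := by simpa [hσ, hb] using (congrArg (· 1) hcomm).symm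
    exact mul_left_cancel₀ ha (h1.trans (mul_comm _ _))
  have : σ = Equiv.mulLeft₀ a ha := by ext x; simp [hσ, hb, hfix τ hτu]
  exact this ▸ mulLeft₀_mem_rootMulSubgroup ha har

end

theorem stmt_15_general (p : ℕ) (hp : Fact p.Prime) (a : ℕ)
    (n : ℕ) (hn : n = p ^ a)
    (r : ℕ) (hr : r.Prime) (hrdvd : r ∣ p ^ n - 1)
    (hzsig : ∀ j : ℕ, 1 ≤ j → j < n → ¬ r ∣ p ^ j - 1) :
    Subgroup.centralizer ((mulSubgroup p n r : Subgroup _) : Set _) ⊓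
        transSubgroup p n = ⊥ ∧
    Subgroup.normalizer ((mulSubgroup p n r : Subgroup _) : Set _) ⊓
        (galSubgroup p n ⊔ mulSubgroup p n r ⊔ transSubgroup p n) =
      galSubgroup p n ⊔ mulSubgroup p n r ∧
    Subgroup.centralizer ((mulSubgroup p n r : Subgroup _) : Set _) ⊓
        (galSubgroup p n ⊔ mulSubgroup p n r ⊔ transSubgroup p n) =
      mulSubgroup p n r := by
  have : Fact r.Prime := ⟨hr⟩
  have hK : Nat.card (GaloisField p n) = p ^ n :=
    GaloisField.card p n (hn ▸ pow_ne_zero a hp.out.ne_zero)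
  obtain ⟨u, hu⟩ := exists_prime_orderOf_dvd_card' (G := (GaloisField p n)ˣ) r
    (by rwa [Nat.card_units, hK])
  have hu1 : u ≠ 1 := fun h => hr.one_lt.ne' (by rw [← hu, h, orderOf_one])
  have hur : (u : GaloisField p n) ^ r = 1 := by
    rw [← Units.val_pow_eq_pow_val, ← hu, pow_orderOf_eq_one, Units.val_one]
  have hfix (τ : GaloisField p n ≃+* GaloisField p n) (hτ : τ u = u) : τ = RingEquiv.refl _ :=
    FiniteField.ringEquiv_eq_refl_of_apply_eq hK (hu ▸ hzsig) hτ
  exact ⟨centralizer_rootMulSubgroup_inf_translationSubgroup hu1 hur,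
    normalizer_rootMulSubgroup_inf_eq hu1 hur,
    centralizer_rootMulSubgroup_inf_eq hu1 hur hfix⟩

/-- Let `p` be a prime, `n = p^a`, `q = p^n`, `r` a Zsigmondy
prime for `(p, n)`. In `G = JRV ≤ AΓL₁(q)` (inside `Sym(F_q)`), with `V` the
translations, `R` the multiplications of order dividing `r`, and `J` the field
automorphisms: `C_V(R) = 1`, `N_G(R) = JR`, and `C_G(R) = R`. -/
theorem stmt_15 (p : ℕ) (hp : Fact p.Prime) (a : ℕ) (ha : 0 < a)
    (n : ℕ) (hn : n = p ^ a)
    (r : ℕ) (hr : r.Prime) (hrdvd : r ∣ p ^ n - 1)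
    (hzsig : ∀ j : ℕ, 1 ≤ j → j < n → ¬ r ∣ p ^ j - 1) :
    Subgroup.centralizer ((mulSubgroup p n r : Subgroup _) : Set _) ⊓
        transSubgroup p n = ⊥ ∧
    Subgroup.normalizer ((mulSubgroup p n r : Subgroup _) : Set _) ⊓
        (galSubgroup p n ⊔ mulSubgroup p n r ⊔ transSubgroup p n) =
      galSubgroup p n ⊔ mulSubgroup p n r ∧
    Subgroup.centralizer ((mulSubgroup p n r : Subgroup _) : Set _) ⊓
        (galSubgroup p n ⊔ mulSubgroup p n r ⊔ transSubgroup p n) =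
      mulSubgroup p n r :=
  stmt_15_general p hp a n hn r hr hrdvd hzsig
end

section
/- Let G be a finite group and let g be a nontrivial element of the Fitting subgroup F(G). Then every maximal element of the poset of nilpotent subgroups of G that are normalized by g contains g. Consequently (by the Hall–Quillen type vanishing lemma) ∑_{H ∈ 𝒫^g} μ(1, H) = 0, where 𝒫^g is the poset of g-invariant nilpotent subgroups of G (including the trivial subgroup). -/
/-- The Fitting subgroup: the join of all normal nilpotent subgroups. -/
def fittingSubgroup (G : Type*) [Group G] : Subgroup G :=
  ⨆ (H : Subgroup G) (_ : H.Normal ∧ Group.IsNilpotent H), H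

open Subgroup

section Aux

variable {G : Type*} [Group G]

private lemma card_mul_relindex' {X Y : Subgroup G} (h : X ≤ Y) :
    Nat.card X * X.relIndex Y = Nat.card Y := by
  rw [← Nat.card_congr (Subgroup.subgroupOfEquivOfLe h).toEquiv]
  exact Subgroup.card_mul_index (X.subgroupOf Y)

private lemma card_sup_mul_card_inf' (A B : Subgroup G) [hB : B.Normal] :
    Nat.card ↥(A ⊔ B) * Nat.card ↥(A ⊓ B) = Nat.card A * Nat.card B := by
  have h1 : Nat.card B * B.relIndex (A ⊔ B) = Nat.card ↥(A ⊔ B) :=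
    card_mul_relindex' le_sup_right
  have h2 : B.relIndex (A ⊔ B) = (A ⊓ B).relIndex A := by
    rw [Subgroup.relIndex_sup_right, ← Subgroup.inf_relIndex_right, inf_comm]
  have h3 : Nat.card ↥(A ⊓ B) * (A ⊓ B).relIndex A = Nat.card A :=
    card_mul_relindex' inf_le_left
  rw [← h1, h2, ← h3]
  ring

private lemma le_map_sylow [Finite G] {p : ℕ} [Fact p.Prime]
    (N : Subgroup G) (hN : Group.IsNilpotent ↥N) (P : Sylow p ↥N)
    {X : Subgroup G} (hXN : X ≤ N) (hX : IsPGroup p ↥X) :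
    X ≤ (P : Subgroup ↥N).map N.subtype := by
  have hPn : (P : Subgroup ↥N).Normal :=
    ((isNilpotent_of_finite_tfae (G := ↥N)).out 0 3 rfl rfl).mp hN p ‹_› P
  haveI := Sylow.unique_of_normal P hPn
  have h1 : IsPGroup p ↥(X.subgroupOf N) :=
    hX.of_equiv (Subgroup.subgroupOfEquivOfLe hXN).symm
  obtain ⟨Q, hQ⟩ := h1.exists_le_sylow
  have hQP : Q = P := Subsingleton.elim Q P
  have hXeq : X = (X.subgroupOf N).map N.subtype := by
    rw [Subgroup.subgroupOf_map_subtype, inf_of_le_left hXN]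
  rw [hXeq]
  exact Subgroup.map_mono (hQP ▸ hQ)

private lemma nilpotent_of_sup_eq_top [Finite G]
    {H K : Subgroup G} [hHn : H.Normal] [hKn : K.Normal]
    (hH : Group.IsNilpotent ↥H) (hK : Group.IsNilpotent ↥K) (htop : H ⊔ K = ⊤) :
    Group.IsNilpotent G := by
  refine ((isNilpotent_of_finite_tfae (G := G)).out 3 0 rfl rfl).mp ?_
  intro p hp P
  haveI : Fact p.Prime := hp
  classical
  obtain ⟨PH⟩ : Nonempty (Sylow p ↥H) := inferInstance
  obtain ⟨PK⟩ : Nonempty (Sylow p ↥K) := inferInstance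
  obtain ⟨PI⟩ : Nonempty (Sylow p ↥(H ⊓ K)) := inferInstance
  have hInil : Group.IsNilpotent ↥(H ⊓ K) := by
    haveI := hH
    exact (Group.isNilpotent_congr (Subgroup.subgroupOfEquivOfLe
      (inf_le_left : H ⊓ K ≤ H))).mp (Subgroup.isNilpotent _)
  -- the unique Sylows of H and K, mapped into G
  set A : Subgroup G := (PH : Subgroup ↥H).map H.subtype with hA_def
  set B : Subgroup G := (PK : Subgroup ↥K).map K.subtype with hB_def
  set C : Subgroup G := (PI : Subgroup ↥(H ⊓ K)).map (H ⊓ K).subtype with hC_def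
  have hPHn : (PH : Subgroup ↥H).Normal :=
    ((isNilpotent_of_finite_tfae (G := ↥H)).out 0 3 rfl rfl).mp hH p ‹_› PH
  have hPKn : (PK : Subgroup ↥K).Normal :=
    ((isNilpotent_of_finite_tfae (G := ↥K)).out 0 3 rfl rfl).mp hK p ‹_› PK
  haveI := Sylow.characteristic_of_normal PH hPHn
  haveI := Sylow.characteristic_of_normal PK hPKn
  haveI hAn : A.Normal := ConjAct.normal_of_characteristic_of_normal
  haveI hBn : B.Normal := ConjAct.normal_of_characteristic_of_normal
  have hAle : A ≤ H := Subgroup.map_subtype_le _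
  have hBle : B ≤ K := Subgroup.map_subtype_le _
  have hCle : C ≤ H ⊓ K := Subgroup.map_subtype_le _
  have hApg : IsPGroup p ↥A := PH.isPGroup'.map _
  have hBpg : IsPGroup p ↥B := PK.isPGroup'.map _
  have hCpg : IsPGroup p ↥C := PI.isPGroup'.map _
  -- C = A ⊓ B
  have hCAB : C = A ⊓ B := by
    apply le_antisymm
    · exact le_inf (le_map_sylow H hH PH (hCle.trans inf_le_left) hCpg)
        (le_map_sylow K hK PK (hCle.trans inf_le_right) hCpg)
    · exact le_map_sylow (H ⊓ K) hInil PI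
        (le_inf (inf_le_left.trans hAle) (inf_le_right.trans hBle))
        (hApg.to_inf_left)
  -- cardinalities
  have cardmap : ∀ (N : Subgroup G) (X : Subgroup ↥N),
      Nat.card ↥(X.map N.subtype) = Nat.card ↥X := fun N X =>
    (Nat.card_congr (Subgroup.equivMapOfInjective X N.subtype
      N.subtype_injective).toEquiv).symm
  have hcardA : Nat.card ↥A = p ^ (Nat.card ↥H).factorization p := by
    rw [hA_def, cardmap]; exact PH.card_eq_multiplicity
  have hcardB : Nat.card ↥B = p ^ (Nat.card ↥K).factorization p := by
    rw [hB_def, cardmap]; exact PK.card_eq_multiplicity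
  have hcardC : Nat.card ↥C = p ^ (Nat.card ↥(H ⊓ K)).factorization p := by
    rw [hC_def, cardmap]; exact PI.card_eq_multiplicity
  have hsupinf : Nat.card ↥(A ⊔ B) * Nat.card ↥(A ⊓ B) =
      Nat.card ↥A * Nat.card ↥B := card_sup_mul_card_inf' A B
  have htop' : Nat.card G * Nat.card ↥(H ⊓ K) = Nat.card ↥H * Nat.card ↥K := by
    have := card_sup_mul_card_inf' H K
    rwa [htop, (Nat.card_congr Subgroup.topEquiv.toEquiv :
      Nat.card ↥(⊤ : Subgroup G) = Nat.card G)] at this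
  set n := Nat.card G
  set a := Nat.card ↥H
  set b := Nat.card ↥K
  set d := Nat.card ↥(H ⊓ K)
  have hn0 : n ≠ 0 := Nat.card_pos.ne'
  have ha0 : a ≠ 0 := Nat.card_pos.ne'
  have hb0 : b ≠ 0 := Nat.card_pos.ne'
  have hd0 : d ≠ 0 := Nat.card_pos.ne'
  have key : n.factorization p + d.factorization p =
      a.factorization p + b.factorization p := by
    have h := congrArg (fun m => m.factorization p) htop'
    simpa [Nat.factorization_mul, hn0, ha0, hb0, hd0, Finsupp.add_apply] using h
  have hcard : Nat.card ↥(A ⊔ B) = p ^ n.factorization p := by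
    have hp0 : 0 < p ^ d.factorization p :=
      pow_pos (Fact.out : p.Prime).pos _
    apply Nat.eq_of_mul_eq_mul_right hp0
    calc Nat.card ↥(A ⊔ B) * p ^ d.factorization p
        = Nat.card ↥(A ⊔ B) * Nat.card ↥(A ⊓ B) := by rw [← hCAB, hcardC]
      _ = Nat.card ↥A * Nat.card ↥B := hsupinf
      _ = p ^ a.factorization p * p ^ b.factorization p := by rw [hcardA, hcardB]
      _ = p ^ (a.factorization p + b.factorization p) := (pow_add p _ _).symm
      _ = p ^ (n.factorization p + d.factorization p) := by rw [key]
      _ = p ^ n.factorization p * p ^ d.factorization p := pow_add p _ _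
  -- A ⊔ B is a normal Sylow p-subgroup of G
  let Q : Sylow p G := Sylow.ofCard (A ⊔ B) hcard
  haveI hQn : Q.Normal := by
    have : (Q : Subgroup G) = A ⊔ B := Sylow.coe_ofCard _ _
    show (Q : Subgroup G).Normal
    rw [this]
    infer_instance
  haveI := Sylow.unique_of_normal Q hQn
  have hPQ : P = Q := Subsingleton.elim P Q
  rw [hPQ]
  exact hQn

private lemma nilpotent_sup [Finite G] {H K : Subgroup G}
    (hHn : H.Normal) (hKn : K.Normal)
    (hH : Group.IsNilpotent ↥H) (hK : Group.IsNilpotent ↥K) :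
    Group.IsNilpotent ↥(H ⊔ K) := by
  haveI := hHn; haveI := hKn
  set M := H ⊔ K with hM
  haveI h1 : (H.subgroupOf M).Normal := hHn.subgroupOf M
  haveI h2 : (K.subgroupOf M).Normal := hKn.subgroupOf M
  have n1 : Group.IsNilpotent ↥(H.subgroupOf M) :=
    (Group.isNilpotent_congr (Subgroup.subgroupOfEquivOfLe (le_sup_left : H ≤ M))).mpr hH
  have n2 : Group.IsNilpotent ↥(K.subgroupOf M) :=
    (Group.isNilpotent_congr (Subgroup.subgroupOfEquivOfLe (le_sup_right : K ≤ M))).mpr hK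
  have hsup : H.subgroupOf M ⊔ K.subgroupOf M = ⊤ := by
    apply Subgroup.map_injective M.subtype_injective
    rw [Subgroup.map_sup, Subgroup.subgroupOf_map_subtype,
      Subgroup.subgroupOf_map_subtype, inf_of_le_left (le_sup_left : H ≤ M),
      inf_of_le_left (le_sup_right : K ≤ M), ← MonoidHom.range_eq_map,
      Subgroup.range_subtype]
  exact nilpotent_of_sup_eq_top n1 n2 hsup

private lemma fitting_spec (G : Type*) [Group G] [Finite G] :
    (fittingSubgroup G).Normal ∧ Group.IsNilpotent ↥(fittingSubgroup G) := by
  classical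
  letI := Fintype.ofFinite (Subgroup G)
  have hset : fittingSubgroup G =
      ({H : Subgroup G | H.Normal ∧ Group.IsNilpotent ↥H}.toFinset).sup id := by
    rw [Finset.sup_id_eq_sSup, Set.coe_toFinset, sSup_eq_iSup]
    rfl
  rw [hset]
  refine Finset.sup_induction (p := fun X : Subgroup G => X.Normal ∧ Group.IsNilpotent ↥X)
    ⟨inferInstance, inferInstance⟩ ?_ ?_
  · rintro A ⟨hAn, hAnil⟩ B ⟨hBn, hBnil⟩
    haveI := hAn; haveI := hBn
    exact ⟨inferInstance, nilpotent_sup hAn hBn hAnil hBnil⟩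
  · intro H hH
    simpa using Set.mem_toFinset.mp hH

private lemma key_step {G : Type*} [Group G] [Finite G] {g : G}
    (hg : g ∈ fittingSubgroup G) {K : Subgroup G}
    (hKnil : Group.IsNilpotent ↥K)
    (hKinv : K.map (MulAut.conj g).toMonoidHom = K) :
    Group.IsNilpotent ↥(K ⊔ zpowers g) ∧
      (K ⊔ zpowers g).map (MulAut.conj g).toMonoidHom = K ⊔ zpowers g := by
  obtain ⟨hFn, hFnil⟩ := fitting_spec G
  set F := fittingSubgroup G
  set H := K ⊔ zpowers g with hH
  have hconjg : (MulAut.conj g).toMonoidHom g = g := by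
    simp [MulAut.conj_apply]
  have hinvH : H.map (MulAut.conj g).toMonoidHom = H := by
    rw [hH, Subgroup.map_sup, hKinv, MonoidHom.map_zpowers, hconjg]
  have hKH : K ≤ H := le_sup_left
  have hgH : g ∈ H := Subgroup.mem_sup_right (Subgroup.mem_zpowers g)
  -- g normalizes K
  have hinvmem : ∀ x : G, x ∈ K ↔ g * x * g⁻¹ ∈ K := by
    intro x
    conv_rhs => rw [← hKinv]
    rw [Subgroup.mem_map_equiv]
    constructor
    · intro hx
      convert hx using 1
      simp [MulAut.conj_symm_apply]
      group
    · intro hx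
      convert hx using 1
      simp [MulAut.conj_symm_apply]
      group
  have hHnorm : H ≤ Subgroup.normalizer (K : Set G) := by
    refine sup_le Subgroup.le_normalizer ?_
    rw [Subgroup.zpowers_le]
    exact Subgroup.mem_normalizer_iff.mpr hinvmem
  -- K is normal in H
  haveI hAn : (K.subgroupOf H).Normal := by
    rw [Subgroup.normal_subgroupOf_iff hKH]
    intro h k hh hk
    exact (Subgroup.mem_normalizer_iff.mp (hHnorm hk) h).mp hh
  haveI := hFn
  haveI hBn : (F.subgroupOf H).Normal := inferInstance
  -- nilpotency of the pieces
  have nA : Group.IsNilpotent ↥(K.subgroupOf H) :=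
    (Group.isNilpotent_congr (Subgroup.subgroupOfEquivOfLe hKH)).mpr hKnil
  have nB : Group.IsNilpotent ↥(F.subgroupOf H) := by
    haveI := hFnil
    have n1 : Group.IsNilpotent ↥((F ⊓ H).subgroupOf F) := Subgroup.isNilpotent _
    have n2 : Group.IsNilpotent ↥(F ⊓ H) :=
      (Group.isNilpotent_congr (Subgroup.subgroupOfEquivOfLe
        (inf_le_left : F ⊓ H ≤ F))).mp n1
    have n3 : Group.IsNilpotent ↥((F ⊓ H).subgroupOf H) :=
      (Group.isNilpotent_congr (Subgroup.subgroupOfEquivOfLe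
        (inf_le_right : F ⊓ H ≤ H))).mpr n2
    rwa [Subgroup.inf_subgroupOf_right] at n3
  -- the two pieces generate H
  have hsup : K.subgroupOf H ⊔ F.subgroupOf H = ⊤ := by
    apply Subgroup.map_injective H.subtype_injective
    rw [Subgroup.map_sup, Subgroup.subgroupOf_map_subtype,
      Subgroup.subgroupOf_map_subtype, inf_of_le_left hKH,
      ← MonoidHom.range_eq_map, Subgroup.range_subtype]
    apply le_antisymm (sup_le hKH inf_le_right)
    refine sup_le le_sup_left ?_
    rw [Subgroup.zpowers_le]
    exact Subgroup.mem_sup_right (Subgroup.mem_inf.mpr ⟨hg, hgH⟩)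
  exact ⟨nilpotent_of_sup_eq_top nA nB hsup, hinvH⟩

/-- Vanishing of the Möbius sum for a finite poset with minimum, given a
"join with a fixed nontrivial element" closure operator. -/
private lemma mu_sum_zero {α : Type*} [PartialOrder α] [Finite α] (bo a : α) (c : α → α)
    (hbot : ∀ x, bo ≤ x) (ha : a ≠ bo) (hle : ∀ x, x ≤ c x) (hac : ∀ x, a ≤ c x)
    (hmin : ∀ x M, x ≤ M → a ≤ M → c x ≤ M) :
    ∑ᶠ x : α, pmu bo x = 0 := by
  letI := Fintype.ofFinite α
  letI := Classical.decEq α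
  letI : DecidableRel ((· < ·) : α → α → Prop) := Classical.decRel _
  letI : DecidableRel ((· ≤ ·) : α → α → Prop) := Classical.decRel _
  letI : LocallyFiniteOrder α := Fintype.toLocallyFiniteOrder
  have hpmu : ∀ x y : α, pmu x y = IncidenceAlgebra.mu ℤ x y := fun x y => rfl
  have wf : WellFounded ((· < ·) : α → α → Prop) := (Finite.to_wellFoundedLT).wf
  have claim : ∀ M : α, a ≤ M →
      (∑ x ∈ Finset.univ.filter (fun x => c x = M),
        IncidenceAlgebra.mu (α := α) ℤ bo x) = 0 := by
    intro M
    induction M using WellFounded.induction wf with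
    | _ M IH =>
    intro haM
    have hMbo : bo ≠ M := fun h => ha (le_antisymm (h ▸ haM) (hbot a))
    have hfilter : Finset.univ.filter (fun x => c x ≤ M) = Finset.Icc bo M := by
      ext x
      simp only [Finset.mem_filter, Finset.mem_univ, true_and, Finset.mem_Icc]
      exact ⟨fun h => ⟨hbot x, le_trans (hle x) h⟩, fun h => hmin x M h.2 haM⟩
    have htotal : (∑ x ∈ Finset.univ.filter (fun x => c x ≤ M),
        IncidenceAlgebra.mu (α := α) ℤ bo x) = 0 := by
      rw [hfilter, IncidenceAlgebra.sum_Icc_mu_right, if_neg hMbo]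
    have hpart := Finset.sum_fiberwise_of_maps_to
      (s := Finset.univ.filter (fun x => c x ≤ M))
      (t := Finset.univ.filter (fun M' => a ≤ M' ∧ M' ≤ M)) (g := c)
      (fun x hx => by
        simp only [Finset.mem_filter, Finset.mem_univ, true_and] at hx ⊢
        exact ⟨hac x, hx⟩)
      (fun x => IncidenceAlgebra.mu (α := α) ℤ bo x)
    have hfib : ∀ M' : α, M' ≤ M →
        (Finset.univ.filter (fun x => c x ≤ M)).filter (fun x => c x = M') =
          Finset.univ.filter (fun x => c x = M') := by
      intro M' hM'
      ext x
      simp only [Finset.mem_filter, Finset.mem_univ, true_and]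
      exact ⟨fun h => h.2, fun h => ⟨h ▸ hM', h⟩⟩
    rw [htotal] at hpart
    have hMmem : M ∈ Finset.univ.filter (fun M' => a ≤ M' ∧ M' ≤ M) := by
      simp [haM]
    have hsingle := Finset.sum_eq_single_of_mem M hMmem
      (f := fun M' => ∑ x ∈ (Finset.univ.filter (fun x => c x ≤ M)).filter
        (fun x => c x = M'), IncidenceAlgebra.mu (α := α) ℤ bo x)
      (fun b hb hbM => by
        simp only [Finset.mem_filter, Finset.mem_univ, true_and] at hb
        rw [hfib b hb.2]
        exact IH b (lt_of_le_of_ne hb.2 hbM) hb.1)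
    rw [hsingle] at hpart
    beta_reduce at hpart
    rw [hfib M le_rfl] at hpart
    exact hpart
  rw [finsum_eq_sum_of_fintype]
  simp only [hpmu]
  rw [← Finset.sum_fiberwise_of_maps_to
    (s := Finset.univ) (t := Finset.univ.filter (fun M => a ≤ M)) (g := c)
    (fun x _ => by simp [hac x])
    (fun x => IncidenceAlgebra.mu (α := α) ℤ bo x)]
  apply Finset.sum_eq_zero
  intro M hM
  have haM : a ≤ M := by simpa using hM
  have : (Finset.univ.filter (fun x => c x = M)) =
      (Finset.univ : Finset α).filter (fun x => c x = M) := rfl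
  exact claim M haM

end Aux

/-- Let `G` be finite and `g ≠ 1` an element of the Fitting
subgroup `F(G)`. Then every maximal element of the poset `𝒫^g` of `g`-invariant
nilpotent subgroups of `G` contains `g`, and consequently
`∑_{H ∈ 𝒫^g} μ(1, H) = 0`. -/
theorem stmt_19 {G : Type*} [Group G] [Finite G]
    (g : G) (hg : g ∈ fittingSubgroup G) (hg1 : g ≠ 1) :
    (∀ K : {H : Subgroup G //
        Group.IsNilpotent H ∧ H.map (MulAut.conj g).toMonoidHom = H},
      (∀ L : {H : Subgroup G //
          Group.IsNilpotent H ∧ H.map (MulAut.conj g).toMonoidHom = H},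
        K ≤ L → L = K) → g ∈ (K : Subgroup G)) ∧
    (∑ᶠ K : {H : Subgroup G //
        Group.IsNilpotent H ∧ H.map (MulAut.conj g).toMonoidHom = H},
      pmu (⟨⊥, inferInstance, by simp⟩ : {H : Subgroup G //
        Group.IsNilpotent H ∧ H.map (MulAut.conj g).toMonoidHom = H}) K) = 0 := by
  classical
  have hzpow_inv : (zpowers g).map (MulAut.conj g).toMonoidHom = zpowers g := by
    rw [MonoidHom.map_zpowers]
    congr 1
    simp [MulAut.conj_apply]
  constructor
  · intro K hmax
    obtain ⟨hnil, hinv⟩ := key_step hg K.2.1 K.2.2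
    have hKle : K ≤ (⟨(K : Subgroup G) ⊔ zpowers g, hnil, hinv⟩ :
        {H : Subgroup G //
          Group.IsNilpotent H ∧ H.map (MulAut.conj g).toMonoidHom = H}) :=
      (le_sup_left : (K : Subgroup G) ≤ (K : Subgroup G) ⊔ zpowers g)
    have heq := hmax _ hKle
    have : ((K : Subgroup G) ⊔ zpowers g) = (K : Subgroup G) := congrArg Subtype.val heq
    rw [← this]
    exact Subgroup.mem_sup_right (Subgroup.mem_zpowers g)
  · refine mu_sum_zero _ (⟨zpowers g, (by
        letI : CommGroup ↥(zpowers g) :=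
          { (inferInstance : Group ↥(zpowers g)) with mul_comm := fun a b => Std.Commutative.comm a b }
        exact CommGroup.isNilpotent), hzpow_inv⟩ :
      {H : Subgroup G //
        Group.IsNilpotent H ∧ H.map (MulAut.conj g).toMonoidHom = H})
      (fun K => ⟨(K : Subgroup G) ⊔ zpowers g, (key_step hg K.2.1 K.2.2).1,
        (key_step hg K.2.1 K.2.2).2⟩) ?_ ?_ ?_ ?_ ?_
    · exact fun x => (bot_le : (⊥ : Subgroup G) ≤ (x : Subgroup G))
    · intro h
      exact hg1 (Subgroup.zpowers_eq_bot.mp (congrArg Subtype.val h))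
    · exact fun x => (le_sup_left : (x : Subgroup G) ≤ _)
    · exact fun x => (le_sup_right : zpowers g ≤ _)
    · exact fun x M hxM haM =>
        (sup_le (hxM : (x : Subgroup G) ≤ (M : Subgroup G)) haM :
          (x : Subgroup G) ⊔ zpowers g ≤ (M : Subgroup G))
end
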